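/- Let X be a set, let F be a nonempty countable class of functions f : X → [0,1] measurable with respect to a σ-algebra on X, let m ≥ 1, let X₁, …, X_m be i.i.d. X-valued random variables, and let σ₁, …, σ_m be i.i.d. random signs uniform on {−1, +1}, independent of the sample. Then E[ sup_{f∈F} (1/m)·Σ_{j=1}^m σ_j · f(X_j) ] ≤ inf_{α>0} ( α + √( 2·ln N(α, F, m) / m ) ). -/

import Mathlib

/-!
Fix the sample. Replacing each `f ∈ F` by an `α`-close element `g` of a cover of size at most
`n` changes the empirical average `(1/m) ∑ σⱼ f(xⱼ)` by at most `α`, so it remains to bound the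
expected maximum of at most `n` Rademacher sums `∑ σⱼ g(xⱼ)`. By Hoeffding's lemma each of them
is sub-Gaussian with variance proxy `m`, and Massart's lemma bounds the expected maximum of `n`
such variables by `√(2 m log n)`. Integrating over the sample (Fubini) gives the theorem.
-/

open MeasureTheory ProbabilityTheory

open Real Finset

open scoped NNReal

lemma le_sqrt_of_forall_le_div_add_mul {A a b : ℝ} (ha : 0 ≤ a) (hb : 0 ≤ b)
    (h : ∀ t > 0, A ≤ a / t + b * t / 2) : A ≤ √(2 * a * b) := by
  rcases le_or_gt A 0 with hA | hA
  · exact hA.trans (sqrt_nonneg _)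
  rcases hb.eq_or_lt with rfl | hb
  · have h₁ := h ((a + 1) / A) (by positivity)
    rw [div_div_eq_mul_div, zero_mul, zero_div, add_zero, le_div_iff₀ (by positivity)] at h₁
    nlinarith
  · have h₁ := h (A / b) (by positivity)
    rw [le_sqrt' hA]
    field_simp at h₁
    nlinarith

section Massart

variable {Ω ι : Type*} [MeasurableSpace Ω] {μ : Measure Ω}

lemma Finset.integrable_sup' {s : Finset ι} (hs : s.Nonempty) {f : ι → Ω → ℝ}
    (hf : ∀ i ∈ s, Integrable (f i) μ) :
    Integrable (fun ω => s.sup' hs fun i => f i ω) μ := by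
  simpa only [← Finset.sup'_apply] using Finset.sup'_induction hs f
    (p := fun g => Integrable g μ) (fun _ h₁ _ h₂ => h₁.sup h₂) hf

variable [IsProbabilityMeasure μ]

/-- The tangent-line bound `log W ≤ log M + W / M - 1` replaces Jensen's inequality when
integrating `t * maxᵢ Zᵢ ≤ log ∑ᵢ exp (t * Zᵢ)`. -/
lemma mul_integral_sup'_le_log_sum_integral_exp {G : Finset ι} (hG : G.Nonempty)
    {Z : ι → Ω → ℝ} (t : ℝ) (hZ : ∀ i ∈ G, Integrable (Z i) μ)
    (hexp : ∀ i ∈ G, Integrable (fun ω => exp (t * Z i ω)) μ) :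
    t * ∫ ω, G.sup' hG (fun i => Z i ω) ∂μ ≤ log (∑ i ∈ G, ∫ ω, exp (t * Z i ω) ∂μ) := by
  set M := ∑ i ∈ G, ∫ ω, exp (t * Z i ω) ∂μ
  have hM : 0 < M := sum_pos (fun i hi => integral_exp_pos (hexp i hi)) hG
  have hpt : ∀ ω, t * G.sup' hG (fun i => Z i ω)
      ≤ log M + (∑ i ∈ G, exp (t * Z i ω)) / M - 1 := by
    intro ω
    obtain ⟨i, hi, hmax⟩ := exists_mem_eq_sup' hG (fun i => Z i ω)
    have hW : 0 < ∑ i ∈ G, exp (t * Z i ω) := sum_pos (fun i _ => exp_pos _) hG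
    have hsoftmax : t * Z i ω ≤ log (∑ i ∈ G, exp (t * Z i ω)) := by
      rw [← log_exp (t * Z i ω)]
      exact log_le_log (exp_pos _)
        (single_le_sum (f := fun i => exp (t * Z i ω)) (fun i _ => (exp_pos _).le) hi)
    have htangent := log_le_sub_one_of_pos (div_pos hW hM)
    rw [log_div hW.ne' hM.ne'] at htangent
    rw [hmax]
    linarith
  have hsum : Integrable (fun ω => ∑ i ∈ G, exp (t * Z i ω)) μ := integrable_finsetSum G hexp
  calc t * ∫ ω, G.sup' hG (fun i => Z i ω) ∂μ
      = ∫ ω, t * G.sup' hG (fun i => Z i ω) ∂μ := (integral_const_mul _ _).symm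
    _ ≤ ∫ ω, (log M - 1 + (∑ i ∈ G, exp (t * Z i ω)) / M) ∂μ := by
        refine integral_mono ((integrable_sup' hG hZ).const_mul t)
          ((integrable_const _).add (hsum.div_const M)) fun ω => ?_
        linarith [hpt ω]
    _ = log M := by
        rw [integral_add (integrable_const _) (hsum.div_const M), integral_div,
          integral_finsetSum G hexp, div_self hM.ne']
        simp

/-- **Massart's finite class lemma**. -/
theorem integral_sup'_le_of_hasSubgaussianMGF {G : Finset ι} (hG : G.Nonempty)
    {Z : ι → Ω → ℝ} {c : ℝ≥0} (hZ : ∀ i ∈ G, HasSubgaussianMGF (Z i) c μ) :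
    ∫ ω, G.sup' hG (fun i => Z i ω) ∂μ ≤ √(2 * log #G * c) := by
  refine le_sqrt_of_forall_le_div_add_mul (log_nonneg (by exact_mod_cast hG.card_pos)) c.2
    fun t ht => ?_
  have hmgf : ∑ i ∈ G, ∫ ω, exp (t * Z i ω) ∂μ ≤ #G * exp (c * t ^ 2 / 2) := by
    simpa [mgf] using sum_le_sum fun i hi => (hZ i hi).mgf_le t
  have hpos : 0 < ∑ i ∈ G, ∫ ω, exp (t * Z i ω) ∂μ :=
    sum_pos (fun i hi => integral_exp_pos ((hZ i hi).integrable_exp_mul t)) hG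
  have hlog := (mul_integral_sup'_le_log_sum_integral_exp hG t
    (fun i hi => (hZ i hi).integrable) fun i hi => (hZ i hi).integrable_exp_mul t).trans
    (log_le_log hpos hmgf)
  rw [log_mul (by positivity) (exp_pos _).ne', log_exp] at hlog
  rw [div_add' _ _ _ ht.ne', le_div_iff₀ ht]
  nlinarith

end Massart

lemma abs_le_one_of_sign {x : ℝ} (h : x = 1 ∨ x = -1) : |x| ≤ 1 := by
  rcases h with rfl | rfl <;> simp

section Rademacher

variable {Ω ι : Type*} [MeasurableSpace Ω] {μ : Measure Ω} [IsProbabilityMeasure μ]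

lemma integral_eq_zero_of_sign {s : Ω → ℝ} (hs : Measurable s)
    (hval : ∀ ω, s ω = 1 ∨ s ω = -1) (hunif : μ {ω | s ω = 1} = 1 / 2) :
    ∫ ω, s ω ∂μ = 0 := by
  set A := {ω | s ω = 1}
  have hA : MeasurableSet A := hs (measurableSet_singleton 1)
  have hs_eq : s = fun ω => A.indicator (fun _ => (2 : ℝ)) ω - 1 := by
    funext ω
    rcases hval ω with h | h <;>
      simp only [A, Set.indicator, Set.mem_ofPred_eq, h] <;> norm_num
  rw [hs_eq, integral_sub ((integrable_const _).indicator hA) (integrable_const _),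
    integral_indicator_const _ hA, measureReal_def, hunif]
  norm_num

lemma hasSubgaussianMGF_sign_mul {s : Ω → ℝ} (hs : Measurable s)
    (hval : ∀ ω, s ω = 1 ∨ s ω = -1) (hunif : μ {ω | s ω = 1} = 1 / 2) {a : ℝ}
    (ha : |a| ≤ 1) : HasSubgaussianMGF (fun ω => s ω * a) 1 μ := by
  have hmem : ∀ ω, s ω * a ∈ Set.Icc (-1) 1 := fun ω => abs_le.1 <| by
    rw [abs_mul]; exact mul_le_one₀ (abs_le_one_of_sign (hval ω)) (abs_nonneg a) ha
  convert hasSubgaussianMGF_of_mem_Icc_of_integral_eq_zero (hs.mul_const a).aemeasurable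
    (ae_of_all _ hmem) (by rw [integral_mul_const, integral_eq_zero_of_sign hs hval hunif,
      zero_mul])
  norm_num

lemma hasSubgaussianMGF_sum_sign_mul [Fintype ι] {σ : ι → Ω → ℝ}
    (hσm : ∀ j, Measurable (σ j)) (hσi : iIndepFun σ μ)
    (hσval : ∀ j ω, σ j ω = 1 ∨ σ j ω = -1) (hσunif : ∀ j, μ {ω | σ j ω = 1} = 1 / 2)
    {a : ι → ℝ} (ha : ∀ j, |a j| ≤ 1) :
    HasSubgaussianMGF (fun ω => ∑ j, σ j ω * a j) (Fintype.card ι) μ := by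
  have := HasSubgaussianMGF.sum_of_iIndepFun (s := univ) (c := fun _ => 1)
    (hσi.comp (fun j u => u * a j) fun j => measurable_mul_const _)
    fun j _ => hasSubgaussianMGF_sign_mul (hσm j) (hσval j) (hσunif j) (ha j)
  rw [sum_const, card_univ, nsmul_one] at this
  exact this

end Rademacher

lemma abs_sum_mul_div_le_one {m : ℕ} {s u : Fin m → ℝ} (hs : ∀ j, |s j| ≤ 1)
    (hu : ∀ j, |u j| ≤ 1) : |(∑ j, s j * u j) / m| ≤ 1 := by
  rw [abs_div, Nat.abs_cast]
  refine div_le_one_of_le₀ ((abs_sum_le_sum_abs _ _).trans ?_) m.cast_nonneg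
  calc ∑ j, |s j * u j| ≤ ∑ _j : Fin m, (1 : ℝ) :=
        sum_le_sum fun j _ => by rw [abs_mul]; exact mul_le_one₀ (hs j) (abs_nonneg _) (hu j)
    _ = m := by simp

lemma ciSup_mem_Icc {ι β : Type*} [Nonempty ι] [ConditionallyCompleteLattice β] {a b : β}
    {g : ι → β} (h : ∀ i, g i ∈ Set.Icc a b) : ⨆ i, g i ∈ Set.Icc a b :=
  ⟨(h (Classical.arbitrary ι)).1.trans
      (le_ciSup ⟨b, Set.forall_mem_range.2 fun i => (h i).2⟩ _),
    ciSup_le fun i => (h i).2⟩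

lemma iSup_le_add_sup'_of_cover {ι κ : Type*} [Nonempty ι] {m : ℕ} (hm : 0 < m)
    {s : Fin m → ℝ} (hs : ∀ j, |s j| ≤ 1) {u : ι → Fin m → ℝ} {v : κ → Fin m → ℝ}
    {G : Finset κ} (hG : G.Nonempty) {α : ℝ}
    (hcov : ∀ i, ∃ k ∈ G, ∀ j, |u i j - v k j| ≤ α) :
    ⨆ i, (∑ j, s j * u i j) / m ≤ α + (G.sup' hG fun k => ∑ j, s j * v k j) / m := by
  refine ciSup_le fun i => ?_
  obtain ⟨k, hk, hclose⟩ := hcov i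
  have hdev : ∑ j, s j * (u i j - v k j) ≤ ∑ _j : Fin m, α := sum_le_sum fun j _ =>
    calc s j * (u i j - v k j) ≤ |s j| * |u i j - v k j| := by
          rw [← abs_mul]; exact le_abs_self _
      _ ≤ α := (mul_le_of_le_one_left (abs_nonneg _) (hs j)).trans (hclose j)
  have hsplit : ∑ j, s j * u i j = ∑ j, s j * v k j + ∑ j, s j * (u i j - v k j) := by
    rw [← sum_add_distrib]
    exact sum_congr rfl fun j _ => by ring
  have hmR : (0 : ℝ) < m := by exact_mod_cast hm
  calc (∑ j, s j * u i j) / m ≤ (∑ j, s j * v k j + m * α) / m := by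
        gcongr
        simpa [hsplit] using hdev
    _ = α + (∑ j, s j * v k j) / m := by field_simp; ring
    _ ≤ α + (G.sup' hG fun k => ∑ j, s j * v k j) / m := by
        gcongr
        exact le_sup' (fun k => ∑ j, s j * v k j) hk

lemma integral_iSup_rademacher_le_of_cover {Ω : Type*} [MeasurableSpace Ω] {μ : Measure Ω}
    [IsProbabilityMeasure μ] {m : ℕ} (hm : 0 < m) {σ : Fin m → Ω → ℝ}
    (hσm : ∀ j, Measurable (σ j)) (hσi : iIndepFun σ μ)
    (hσval : ∀ j ω, σ j ω = 1 ∨ σ j ω = -1) (hσunif : ∀ j, μ {ω | σ j ω = 1} = 1 / 2)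
    {ι κ : Type*} [Nonempty ι] {u : ι → Fin m → ℝ} {v : κ → Fin m → ℝ} {G : Finset κ}
    (hv : ∀ k ∈ G, ∀ j, |v k j| ≤ 1) {α : ℝ}
    (hcov : ∀ i, ∃ k ∈ G, ∀ j, |u i j - v k j| ≤ α) {n : ℕ} (hGn : #G ≤ n)
    (hint : Integrable (fun ω => ⨆ i, (∑ j, σ j ω * u i j) / m) μ) :
    ∫ ω, ⨆ i, (∑ j, σ j ω * u i j) / m ∂μ ≤ α + √(2 * log n / m) := by
  have hmR : (0 : ℝ) < m := by exact_mod_cast hm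
  obtain ⟨k₀, hk₀, -⟩ := hcov (Classical.arbitrary ι)
  have hG : G.Nonempty := ⟨k₀, hk₀⟩
  have hsubG : ∀ k ∈ G, HasSubgaussianMGF (fun ω => ∑ j, σ j ω * v k j) m μ := fun k hk => by
    simpa using hasSubgaussianMGF_sum_sign_mul hσm hσi hσval hσunif (hv k hk)
  have hsup_int := integrable_sup' hG fun k hk => (hsubG k hk).integrable
  have hlog : log #G ≤ log n :=
    log_le_log (by exact_mod_cast hG.card_pos) (by exact_mod_cast hGn)
  calc ∫ ω, ⨆ i, (∑ j, σ j ω * u i j) / m ∂μ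
      ≤ ∫ ω, (α + (G.sup' hG fun k => ∑ j, σ j ω * v k j) / m) ∂μ :=
        integral_mono hint ((integrable_const α).add (hsup_int.div_const _)) fun ω =>
          iSup_le_add_sup'_of_cover hm (abs_le_one_of_sign <| hσval · ω) hG hcov
    _ = α + (∫ ω, G.sup' hG (fun k => ∑ j, σ j ω * v k j) ∂μ) / m := by
        rw [integral_add (integrable_const α) (hsup_int.div_const _), integral_div]
        simp
    _ ≤ α + √(2 * log #G * m) / m := by
        gcongr
        simpa using integral_sup'_le_of_hasSubgaussianMGF hG hsubG
    _ = α + √(2 * log #G / m) := by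
        rw [show 2 * log #G / m = 2 * log #G * m / m ^ 2 by field_simp,
          sqrt_div' _ (by positivity), sqrt_sq hmR.le]
    _ ≤ α + √(2 * log n / m) := by gcongr

theorem stmt_7_general {X : Type*} [MeasurableSpace X]
    (F : Set (X → ℝ)) (hFc : F.Countable) (hFne : F.Nonempty)
    (hFm : ∀ f ∈ F, Measurable f) (hF01 : ∀ f ∈ F, ∀ x, f x ∈ Set.Icc (0 : ℝ) 1)
    (m : ℕ) (hm : 0 < m)
    {Ω₁ Ω₂ : Type*} [MeasurableSpace Ω₁] [MeasurableSpace Ω₂]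
    (μ₁ : Measure Ω₁) (μ₂ : Measure Ω₂)
    [IsProbabilityMeasure μ₁] [IsProbabilityMeasure μ₂]
    (Xs : Fin m → Ω₁ → X) (hXm : ∀ j, Measurable (Xs j))
    (σ : Fin m → Ω₂ → ℝ) (hσm : ∀ j, Measurable (σ j))
    (hσi : iIndepFun σ μ₂)
    (hσval : ∀ j x, σ j x = 1 ∨ σ j x = -1)
    (hσunif : ∀ j, μ₂ {x | σ j x = 1} = 1 / 2)
    (α : ℝ) (n : ℕ)
    (hcover : ∀ S : Fin m → X, ∃ G : Finset (X → ℝ), G.card ≤ n ∧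
        (∀ g ∈ G, ∀ x, g x ∈ Set.Icc (0 : ℝ) 1) ∧
        ∀ f ∈ F, ∃ g ∈ G, ∀ j, |f (S j) - g (S j)| ≤ α) :
    (∫ ω, (⨆ f : F, (∑ j, σ j ω.2 * (f : X → ℝ) (Xs j ω.1)) / m) ∂(μ₁.prod μ₂))
      ≤ α + Real.sqrt (2 * Real.log n / m) := by
  have : Countable F := hFc.to_subtype
  have : Nonempty F := hFne.to_subtype
  have hunit : ∀ y ∈ Set.Icc (0 : ℝ) 1, |y| ≤ 1 :=
    fun y hy => abs_le.2 ⟨by linarith [hy.1], hy.2⟩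
  set H : Ω₁ × Ω₂ → ℝ := fun ω => ⨆ f : F, (∑ j, σ j ω.2 * (f : X → ℝ) (Xs j ω.1)) / m
  have hH_meas : Measurable H := Measurable.iSup fun f => by
    have := hFm f f.2
    fun_prop
  have hH_int : Integrable H (μ₁.prod μ₂) :=
    Integrable.of_mem_Icc (-1) 1 hH_meas.aemeasurable <| ae_of_all _ fun ω => ciSup_mem_Icc
      fun f : F => abs_le.1 <| abs_sum_mul_div_le_one (abs_le_one_of_sign <| hσval · ω.2)
        fun j => hunit _ (hF01 f f.2 _)
  have hinner : ∀ᵐ ω₁ ∂μ₁, ∫ ω₂, H (ω₁, ω₂) ∂μ₂ ≤ α + √(2 * log n / m) := by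
    filter_upwards [hH_int.prod_right_ae] with ω₁ hint
    obtain ⟨G, hGn, hG01, hGcov⟩ := hcover fun j => Xs j ω₁
    exact integral_iSup_rademacher_le_of_cover hm hσm hσi hσval hσunif
      (fun g hg j => hunit _ (hG01 g hg _)) (fun f : F => hGcov f f.2) hGn hint
  calc ∫ ω, H ω ∂(μ₁.prod μ₂) = ∫ ω₁, ∫ ω₂, H (ω₁, ω₂) ∂μ₂ ∂μ₁ := integral_prod H hH_int
    _ ≤ ∫ _, (α + √(2 * log n / m)) ∂μ₁ :=
        integral_mono_ae hH_int.integral_prod_left (integrable_const _) hinner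
    _ = α + √(2 * log n / m) := by simp

/-- **Covering number bound on the Rademacher complexity.**
Let `F` be a nonempty countable class of measurable functions `X → [0,1]`, let
`Xs 0, …, Xs (m-1)` be i.i.d. `X`-valued random variables on `(Ω₁, μ₁)`, and let
`σ 0, …, σ (m-1)` be i.i.d. uniform random signs on `(Ω₂, μ₂)`, independent of the sample
(product measure).  If `n` is any cardinality such that every sample `S ∈ X^m` admits a set
`G` of at most `n` functions `X → [0,1]` that `α`-covers `F` in the `‖·‖_{∞,S}` norm
(i.e. `N(α, F, m) ≤ n`), then the Rademacher complexity satisfies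
`E[sup_{f∈F} (1/m)·Σ_j σ j · f (Xs j)] ≤ α + √(2·ln n / m)`.
(Quantifying over all valid `n` expresses the infimum over `α > 0` of
`α + √(2 ln N(α,F,m)/m)`, including the convention that the term is `+∞` when no finite
cover exists.) -/
theorem stmt_7 {X : Type*} [MeasurableSpace X]
    (F : Set (X → ℝ)) (hFc : F.Countable) (hFne : F.Nonempty)
    (hFm : ∀ f ∈ F, Measurable f) (hF01 : ∀ f ∈ F, ∀ x, f x ∈ Set.Icc (0 : ℝ) 1)
    (m : ℕ) (hm : 0 < m)
    {Ω₁ Ω₂ : Type*} [MeasurableSpace Ω₁] [MeasurableSpace Ω₂]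
    (μ₁ : Measure Ω₁) (μ₂ : Measure Ω₂)
    [IsProbabilityMeasure μ₁] [IsProbabilityMeasure μ₂]
    (Xs : Fin m → Ω₁ → X) (hXm : ∀ j, Measurable (Xs j))
    (hXi : iIndepFun Xs μ₁)
    (hXid : ∀ j, IdentDistrib (Xs j) (Xs ⟨0, hm⟩) μ₁ μ₁)
    (σ : Fin m → Ω₂ → ℝ) (hσm : ∀ j, Measurable (σ j))
    (hσi : iIndepFun σ μ₂)
    (hσval : ∀ j x, σ j x = 1 ∨ σ j x = -1)
    (hσunif : ∀ j, μ₂ {x | σ j x = 1} = 1 / 2)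
    (α : ℝ) (hα : 0 < α) (n : ℕ)
    (hcover : ∀ S : Fin m → X, ∃ G : Finset (X → ℝ), G.card ≤ n ∧
        (∀ g ∈ G, ∀ x, g x ∈ Set.Icc (0 : ℝ) 1) ∧
        ∀ f ∈ F, ∃ g ∈ G, ∀ j, |f (S j) - g (S j)| ≤ α) :
    (∫ ω, (⨆ f : F, (∑ j, σ j ω.2 * (f : X → ℝ) (Xs j ω.1)) / m) ∂(μ₁.prod μ₂))
      ≤ α + Real.sqrt (2 * Real.log n / m) :=
  stmt_7_general F hFc hFne hFm hF01 m hm μ₁ μ₂ Xs hXm σ hσm hσi hσval hσunif α n hcover
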